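/- If P and Q are quasi-identity n×n matrices over the extended tropical semifield D(ℝ), then the diagonal entries of PQ are not all ghosts: there exists an index i with (PQ)_{ii} ∉ G₀. -/

import Mathlib

/-!
Write `w i k = ν(P i k) + ν(Q k i)` for the values in `ℝ ∪ {-∞}`. A quasi-identity has diagonal
`𝟙` (a ghost diagonal entry would make its permanent ghost), idempotence makes its values
superadditive along paths, and every 2-cycle `i → k → i` with `i ≠ k` has negative value, since
the ghost term `Q i k * Q k i` of `(Q * Q) i i = 𝟙` must lose against `𝟙`. Hence `w` is
superadditive with negative 2-cycles, so `0 ≤ w i k` is a strict order on the indices and has a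
maximal element `i`. If `(P * Q) i i` were ghost, the tangible term `P i i * Q i i = 𝟙` would have
to be matched by some `k ≠ i` with `0 ≤ w i k`.
-/

noncomputable section

/-- The extended tropical semifield `D(ℝ)`: `bot` is `-∞`; `nb g r` is the element of
underlying value `r : ℝ`, ghost if `g = true`, tangible if `g = false`. -/
inductive DR : Type where
  | bot : DR
  | nb : Bool → ℝ → DR

namespace DR

/-- Supertropical addition on `D(ℝ)`. -/
def add : DR → DR → DR
  | bot, y => y
  | x, bot => x
  | nb b r, nb c s => if r < s then nb c s else if s < r then nb b r else nb true r

/-- Supertropical multiplication on `D(ℝ)`. -/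
def mul : DR → DR → DR
  | bot, _ => bot
  | _, bot => bot
  | nb b r, nb c s => nb (b || c) (r + s)

theorem bot_add (x : DR) : add bot x = x := by cases x <;> rfl

theorem add_bot (x : DR) : add x bot = x := by cases x <;> rfl

theorem bot_mul (x : DR) : mul bot x = bot := by cases x <;> rfl

theorem mul_bot (x : DR) : mul x bot = bot := by cases x <;> rfl

theorem add_comm' (x y : DR) : add x y = add y x := by
  cases x <;> cases y <;> (try rfl)
  simp only [add]
  split_ifs <;>
    first
      | rfl
      | (exfalso; linarith)
      | (congr 1 <;> first | rfl | linarith)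

theorem add_assoc' (x y z : DR) : add (add x y) z = add x (add y z) := by
  cases x with
  | bot => rw [bot_add, bot_add]
  | nb b r =>
    cases y with
    | bot => rw [add_bot, bot_add]
    | nb c s =>
      cases z with
      | bot => rw [add_bot, add_bot]
      | nb d t =>
        simp only [add]
        split_ifs <;>
          simp only [add] <;>
          (try split_ifs) <;>
          first
            | rfl
            | (exfalso; linarith)
            | (congr 1 <;> first | rfl | linarith)

theorem mul_comm' (x y : DR) : mul x y = mul y x := by
  cases x <;> cases y <;> (try rfl)
  simp [mul, Bool.or_comm, add_comm]

theorem mul_assoc' (x y z : DR) : mul (mul x y) z = mul x (mul y z) := by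
  cases x <;> cases y <;> cases z <;> (try rfl) <;>
    simp [mul, Bool.or_assoc, add_assoc]

theorem one_mul' (x : DR) : mul (nb false 0) x = x := by
  cases x <;> simp [mul]

theorem left_distrib' (x y z : DR) : mul x (add y z) = add (mul x y) (mul x z) := by
  cases x with
  | bot => simp [bot_mul, bot_add]
  | nb b r =>
    cases y with
    | bot => simp [bot_add, mul_bot]
    | nb c s =>
      cases z with
      | bot => simp [add_bot, mul_bot]
      | nb d t =>
        simp only [mul, add]
        split_ifs <;>
          simp only [mul, add, Bool.or_true, Bool.true_or] <;>
          (try split_ifs) <;>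
          first
            | rfl
            | (exfalso; linarith)
            | (congr 1 <;> first | rfl | linarith)

theorem right_distrib' (x y z : DR) : mul (add x y) z = add (mul x z) (mul y z) := by
  rw [mul_comm' (add x y) z, left_distrib', mul_comm' z x, mul_comm' z y]

instance : Add DR := ⟨add⟩
instance : Zero DR := ⟨bot⟩
instance : Mul DR := ⟨mul⟩
instance : One DR := ⟨nb false 0⟩

instance : AddCommMonoid DR where
  add := add
  add_assoc := add_assoc'
  zero := bot
  zero_add := bot_add
  add_zero := add_bot
  add_comm := add_comm'
  nsmul := nsmulRec

instance : CommMonoid DR where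
  mul := mul
  mul_assoc := mul_assoc'
  one := nb false 0
  one_mul := one_mul'
  mul_one := fun x => by show mul x (nb false 0) = x; rw [mul_comm']; exact one_mul' x
  mul_comm := mul_comm'
  npow := npowRec

instance : CommSemiring DR where
  __ := (inferInstance : AddCommMonoid DR)
  __ := (inferInstance : CommMonoid DR)
  left_distrib := left_distrib'
  right_distrib := right_distrib'
  zero_mul := bot_mul
  mul_zero := mul_bot

/-- The ghost ideal `G₀ = ℝ^ν ∪ {-∞}` as a predicate. -/
def IsGhost : DR → Prop
  | bot => True
  | nb b _ => b = true

/-- The tangible elements `T = ℝ` as a predicate. -/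
def Tangible : DR → Prop
  | nb false _ => True
  | _ => False

/-- Membership in `T ∪ {-∞}`. -/
def TangibleOrBot (x : DR) : Prop := x = bot ∨ Tangible x

/-- The underlying value in `ℝ ∪ {-∞}`. -/
def val : DR → WithBot ℝ
  | bot => ⊥
  | nb _ r => (r : WithBot ℝ)

/-- `x ≤_ν y` : comparison of underlying values, `-∞` smallest. -/
def nuLe (x y : DR) : Prop := val x ≤ val y

/-- `x <_ν y` : strict comparison of underlying values, `-∞` smallest. -/
def nuLt (x y : DR) : Prop := val x < val y

/-- The tangible lift `x̂` of `x` (with `hat bot = bot`). -/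
def hat : DR → DR
  | bot => bot
  | nb _ r => nb false r

/-- The ghost map `ν`. -/
def nu : DR → DR
  | bot => bot
  | nb _ r => nb true r

/-- The ghost-surpass relation `x ⊨ y` on `D(ℝ)`. -/
def GhostSurp (x y : DR) : Prop := ∃ c : DR, IsGhost c ∧ x = y + c

end DR

open DR

/-- A vector in `D(ℝ)^(n)` lies in the ghost submodule `G₀^(n)`. -/
def GhostVec {n : ℕ} (v : Fin n → DR) : Prop := ∀ j, IsGhost (v j)

/-- A tangible vector: all entries in `T ∪ {-∞}`. -/
def TangibleVec {n : ℕ} (v : Fin n → DR) : Prop := ∀ j, TangibleOrBot (v j)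

/-- The ghost-surpass relation `v ⊨ w` on vectors. -/
def GhostSurpVec {n : ℕ} (v w : Fin n → DR) : Prop :=
  ∃ u : Fin n → DR, GhostVec u ∧ v = w + u

/-- A family of vectors is tropically dependent. -/
def TropDep {ι : Type*} [Fintype ι] {n : ℕ} (w : ι → Fin n → DR) : Prop :=
  ∃ I : Finset ι, I.Nonempty ∧ ∃ α : ι → DR, (∀ i ∈ I, Tangible (α i)) ∧
    ∀ j : Fin n, IsGhost (∑ i ∈ I, α i * w i j)

/-- A family of vectors is tropically independent. -/
def TropIndep {ι : Type*} [Fintype ι] {n : ℕ} (w : ι → Fin n → DR) : Prop := ¬ TropDep w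

/-- A set of vectors is tropically dependent. -/
def SetTropDep {n : ℕ} (S : Set (Fin n → DR)) : Prop :=
  ∃ I : Finset (Fin n → DR), ↑I ⊆ S ∧ I.Nonempty ∧
    ∃ α : (Fin n → DR) → DR, (∀ w ∈ I, Tangible (α w)) ∧
      ∀ j : Fin n, IsGhost (∑ w ∈ I, α w * w j)

/-- A set of vectors is tropically independent. -/
def SetTropIndep {n : ℕ} (S : Set (Fin n → DR)) : Prop := ¬ SetTropDep S

/-- A d-base of `V`: a maximal tropically independent subset of `V`. -/
def IsDBase {n : ℕ} (V S : Set (Fin n → DR)) : Prop :=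
  S ⊆ V ∧ SetTropIndep S ∧ ∀ S', S ⊆ S' → S' ⊆ V → SetTropIndep S' → S' = S

/-- The rank of `V`: the maximal number of elements of a d-base of `V`. -/
noncomputable def trank {n : ℕ} (V : Set (Fin n → DR)) : ℕ :=
  sSup {m | ∃ S, IsDBase V S ∧ S.Finite ∧ S.ncard = m}

/-- `v` is tropically spanned by `S`. -/
def SpannedBy {n : ℕ} (S : Set (Fin n → DR)) (v : Fin n → DR) : Prop :=
  ∃ I : Finset (Fin n → DR), ↑I ⊆ S ∧ I.Nonempty ∧
    ∃ α : (Fin n → DR) → DR, (∀ w ∈ I, Tangible (α w)) ∧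
      GhostSurpVec v (fun j => ∑ w ∈ I, α w * w j)

/-- The tropical determinant (permanent) of a square matrix over `D(ℝ)`. -/
noncomputable def tperm {k : ℕ} (A : Matrix (Fin k) (Fin k) DR) : DR :=
  ∑ π : Equiv.Perm (Fin k), ∏ i, A (π i) i

/-- A quasi-identity matrix: nonsingular, multiplicatively idempotent, and
ghost-surpassing the identity matrix entrywise. -/
def QuasiIdentity {n : ℕ} (Q : Matrix (Fin n) (Fin n) DR) : Prop :=
  Tangible (tperm Q) ∧ Q * Q = Q ∧ (∀ i, GhostSurp (Q i i) 1) ∧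
    ∀ i j, i ≠ j → IsGhost (Q i j)


namespace DR

theorem Tangible.not_isGhost {x : DR} (h : Tangible x) : ¬ IsGhost x := by
  cases x with
  | bot => exact h.elim
  | nb b r => cases b <;> simp_all [Tangible, IsGhost]

theorem not_isGhost_one : ¬ IsGhost (1 : DR) :=
  Tangible.not_isGhost trivial

theorem isGhost_add {x y : DR} (hx : IsGhost x) (hy : IsGhost y) : IsGhost (x + y) := by
  cases x with
  | bot => exact hy
  | nb b r =>
    cases y with
    | bot => exact hx
    | nb c s =>
      change IsGhost (add _ _)
      simp only [add]
      split_ifs <;> simp_all [IsGhost]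

theorem isGhost_mul {x : DR} (y : DR) (hx : IsGhost x) : IsGhost (x * y) := by
  change IsGhost (mul x y)
  cases x <;> cases y <;> simp_all [IsGhost, mul]

theorem isGhost_sum {ι : Type*} {s : Finset ι} {f : ι → DR}
    (h : ∀ i ∈ s, IsGhost (f i)) : IsGhost (∑ i ∈ s, f i) :=
  Finset.sum_induction f IsGhost (fun _ _ => isGhost_add) trivial h

theorem isGhost_prod {ι : Type*} [DecidableEq ι] {s : Finset ι} {f : ι → DR} {j : ι}
    (hj : j ∈ s) (h : IsGhost (f j)) : IsGhost (∏ i ∈ s, f i) := by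
  rw [← Finset.mul_prod_erase _ _ hj]
  exact isGhost_mul _ h

theorem GhostSurp.eq_of_not_isGhost {x y : DR} (hxy : GhostSurp x y) (hx : ¬ IsGhost x) :
    x = y := by
  obtain ⟨c, hc, rfl⟩ := hxy
  cases c with
  | bot => exact add_bot y
  | nb b r =>
    cases y with
    | bot => exact absurd hc hx
    | nb d s =>
      change ¬ IsGhost (add _ _) at hx
      change add _ _ = _
      simp only [add] at hx ⊢
      split_ifs at hx ⊢ <;> simp_all [IsGhost]

theorem val_one : val (1 : DR) = 0 := rfl

theorem val_add (x y : DR) : val (x + y) = max (val x) (val y) := by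
  cases x with
  | bot => simp [val, HAdd.hAdd, Add.add, add]
  | nb b r =>
    cases y with
    | bot => simp [val, HAdd.hAdd, Add.add, add]
    | nb c s =>
      change val (add _ _) = _
      simp only [add]
      split_ifs with hrs hsr
      · simp [val, hrs.le]
      · simp [val, hsr.le]
      · simp [val, le_antisymm (not_lt.1 hsr) (not_lt.1 hrs)]

theorem val_mul (x y : DR) : val (x * y) = val x + val y := by
  cases x with
  | bot => rfl
  | nb b r =>
    cases y with
    | bot => rfl
    | nb c s => simp [val, HMul.hMul, Mul.mul, mul]

theorem val_sum {ι : Type*} (s : Finset ι) (f : ι → DR) :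
    val (∑ i ∈ s, f i) = s.sup fun i => val (f i) := by
  classical
  induction s using Finset.induction_on with
  | empty => rfl
  | insert a s ha ih => rw [Finset.sum_insert ha, Finset.sup_insert, val_add, ih]

theorem val_lt_val_add_of_isGhost {x y : DR} (hx : IsGhost x) (h : ¬ IsGhost (x + y)) :
    val x < val (x + y) := by
  change ¬ IsGhost (add x y) at h
  change val x < val (add x y)
  cases x <;> cases y <;> simp only [add] at h ⊢ <;> (try split_ifs at h ⊢) <;>
    simp_all [IsGhost, val]

theorem val_le_of_isGhost_add {x y : DR} (hx : ¬ IsGhost x) (h : IsGhost (x + y)) :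
    val x ≤ val y := by
  change IsGhost (add x y) at h
  cases x <;> cases y <;> simp only [add] at h <;> (try split_ifs at h) <;>
    simp_all [IsGhost, val, le_of_lt]

end DR

open DR

theorem exists_forall_lt_zero_of_add_le {α M : Type*} [Finite α] [Nonempty α]
    [AddCommMonoid M] [LinearOrder M] [IsOrderedAddMonoid M] (C : α → α → M)
    (hle : ∀ i j k, C i j + C j k ≤ C i k) (hlt : ∀ i k, i ≠ k → C i k + C k i < 0) :
    ∃ i, ∀ k, k ≠ i → C i k < 0 := by
  -- `0 ≤ C i k` is a strict order on `α`, so it has a maximal element.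
  let above : α → α → Prop := fun k i => i ≠ k ∧ 0 ≤ C i k
  have : IsTrans α above := ⟨fun a b c ⟨_, hba⟩ ⟨hcb, hcb'⟩ =>
    ⟨by rintro rfl; exact (hlt c b hcb).not_ge (add_nonneg hcb' hba),
      (add_nonneg hcb' hba).trans (hle c b a)⟩⟩
  have : Std.Irrefl above := ⟨fun _ h => h.1 rfl⟩
  obtain ⟨i, -, hi⟩ := (Finite.wellFounded_of_trans_of_irrefl above).has_min Set.univ
    Set.univ_nonempty
  exact ⟨i, fun k hk => not_le.1 fun h => hi k trivial ⟨hk.symm, h⟩⟩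

theorem isGhost_tperm_of_isGhost_diag {n : ℕ} {A : Matrix (Fin n) (Fin n) DR}
    (hoff : ∀ i j, i ≠ j → IsGhost (A i j)) {i : Fin n} (hi : IsGhost (A i i)) :
    IsGhost (tperm A) :=
  isGhost_sum fun π _ => isGhost_prod (Finset.mem_univ i) <| by
    by_cases h : π i = i
    · rwa [h]
    · exact hoff _ _ h

theorem val_add_val_le_val_mul_apply {ι : Type*} [Fintype ι] (A B : Matrix ι ι DR)
    (i j k : ι) : val (A i j) + val (B j k) ≤ val ((A * B) i k) := by
  rw [Matrix.mul_apply, val_sum, ← val_mul]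
  exact Finset.le_sup (f := fun m => val (A i m * B m k)) (Finset.mem_univ j)

namespace QuasiIdentity

variable {n : ℕ} {Q : Matrix (Fin n) (Fin n) DR}

theorem diag_eq_one (hQ : QuasiIdentity Q) (i : Fin n) : Q i i = 1 :=
  (hQ.2.2.1 i).eq_of_not_isGhost fun hi =>
    hQ.1.not_isGhost (isGhost_tperm_of_isGhost_diag hQ.2.2.2 hi)

theorem val_add_val_le (hQ : QuasiIdentity Q) (i j k : Fin n) :
    val (Q i j) + val (Q j k) ≤ val (Q i k) :=
  (val_add_val_le_val_mul_apply Q Q i j k).trans_eq (by rw [hQ.2.1])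

theorem val_add_val_lt_zero (hQ : QuasiIdentity Q) {i k : Fin n} (hik : i ≠ k) :
    val (Q i k) + val (Q k i) < 0 := by
  classical
  have hii := congrFun (congrFun hQ.2.1 i) i
  rw [Matrix.mul_apply, diag_eq_one hQ i, ← Finset.add_sum_erase _ _ (Finset.mem_univ k)] at hii
  have h := val_lt_val_add_of_isGhost (isGhost_mul _ (hQ.2.2.2 i k hik))
    (hii ▸ not_isGhost_one)
  rwa [hii, val_one, val_mul] at h

end QuasiIdentity

theorem exists_val_add_val_nonneg_of_isGhost_mul_apply {ι : Type*} [Fintype ι] [DecidableEq ι]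
    {P Q : Matrix ι ι DR} {i : ι} (hP : P i i = 1) (hQ : Q i i = 1)
    (hg : IsGhost ((P * Q) i i)) : ∃ k, k ≠ i ∧ 0 ≤ val (P i k) + val (Q k i) := by
  rw [Matrix.mul_apply, ← Finset.add_sum_erase _ _ (Finset.mem_univ i), hP, hQ, one_mul] at hg
  have h := val_le_of_isGhost_add not_isGhost_one hg
  rw [val_one, val_sum, Finset.le_sup_iff (WithBot.bot_lt_coe 0)] at h
  obtain ⟨k, hk, h0⟩ := h
  exact ⟨k, Finset.ne_of_mem_erase hk, by rwa [← val_mul]⟩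

/-- The diagonal of the product of two quasi-identity matrices over `D(ℝ)`
cannot consist entirely of ghosts. -/
theorem diag_of_product_of_quasi_identities_not_all_ghost (n : ℕ) (hn : 0 < n)
    (P Q : Matrix (Fin n) (Fin n) DR) (hP : QuasiIdentity P) (hQ : QuasiIdentity Q) :
    ∃ i, ¬ IsGhost ((P * Q) i i) := by
  have : Nonempty (Fin n) := ⟨⟨0, hn⟩⟩
  obtain ⟨i, hi⟩ := exists_forall_lt_zero_of_add_le (fun i k => val (P i k) + val (Q k i))
    (fun i j k => by
      calc val (P i j) + val (Q j i) + (val (P j k) + val (Q k j))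
          = (val (P i j) + val (P j k)) + (val (Q k j) + val (Q j i)) := by abel
        _ ≤ val (P i k) + val (Q k i) :=
          add_le_add (hP.val_add_val_le i j k) (hQ.val_add_val_le k j i))
    (fun i k hik => by
      calc val (P i k) + val (Q k i) + (val (P k i) + val (Q i k))
          = (val (P i k) + val (P k i)) + (val (Q k i) + val (Q i k)) := by abel
        _ < 0 := add_neg_of_neg_of_nonpos (hP.val_add_val_lt_zero hik)
          (hQ.val_add_val_lt_zero hik.symm).le)
  refine ⟨i, fun hg => ?_⟩
  obtain ⟨k, hki, hk⟩ :=
    exists_val_add_val_nonneg_of_isGhost_mul_apply (hP.diag_eq_one i) (hQ.diag_eq_one i) hg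
  exact (hi k hki).not_ge hk
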